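/- Let h : X → {±1}, x ∼ D on a finite set, and let g be an ε₀-valid EF with ε₀ < 1/2. Then I(g(x,h(x)); h(x)) ≥ (1-ε₀)·H(h(x)) - 2√ε₀. That is, a valid explanation carries almost all the entropy of the prediction as mutual information. -/

import Mathlib

open scoped Classical

/-- Probability of an event under distribution `D` on a finite sample space. -/
noncomputable def pr {Ω : Type*} [Fintype Ω] (D : Ω → ℝ) (p : Ω → Prop) : ℝ :=
  ∑ x, if p x then D x else 0

/-- Shannon entropy (base 2) of a random variable `f` under `D`. -/
noncomputable def ent {Ω A : Type*} [Fintype Ω] (D : Ω → ℝ) (f : Ω → A) : ℝ :=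
  -∑ a ∈ Finset.image f Finset.univ,
      pr D (fun x => f x = a) * Real.logb 2 (pr D (fun x => f x = a))

/-- Mutual information (base 2) between random variables `f` and `g` under `D`. -/
noncomputable def mi {Ω A B : Type*} [Fintype Ω] (D : Ω → ℝ) (f : Ω → A) (g : Ω → B) : ℝ :=
  ent D f + ent D g - ent D (fun x => (f x, g x))

/-- Binary entropy function (base 2). -/
noncomputable def binEnt (p : ℝ) : ℝ := -(p * Real.logb 2 p) - (1 - p) * Real.logb 2 (1 - p)

/-- `D` is a probability distribution. -/
def IsProb {Ω : Type*} [Fintype Ω] (D : Ω → ℝ) : Prop :=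
  (∀ x, 0 ≤ D x) ∧ ∑ x, D x = 1

section lemmas
variable {Ω A B : Type*} [Fintype Ω] {D : Ω → ℝ}

lemma pr_nonneg (hD : ∀ x, 0 ≤ D x) (p : Ω → Prop) : 0 ≤ pr D p := by
  refine Finset.sum_nonneg fun x _ => ?_
  split <;> simp [hD x]

lemma pr_le_one (hD : IsProb D) (p : Ω → Prop) : pr D p ≤ 1 := by
  rw [← hD.2]
  refine Finset.sum_le_sum fun x _ => ?_
  split <;> simp [hD.1 x]

lemma pr_congr {p q : Ω → Prop} (hpq : ∀ x, p x ↔ q x) : pr D p = pr D q := by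
  refine Finset.sum_congr rfl fun x _ => ?_
  by_cases hx : p x
  · rw [if_pos hx, if_pos ((hpq x).1 hx)]
  · rw [if_neg hx, if_neg (fun hq => hx ((hpq x).2 hq))]

lemma pr_mono (hD : ∀ x, 0 ≤ D x) {p q : Ω → Prop} (hpq : ∀ x, p x → q x) :
    pr D p ≤ pr D q := by
  refine Finset.sum_le_sum fun x _ => ?_
  by_cases hx : p x
  · rw [if_pos hx, if_pos (hpq x hx)]
  · rw [if_neg hx]; split <;> simp [hD x]

lemma le_pr (hD : ∀ x, 0 ≤ D x) {p : Ω → Prop} {x : Ω} (hx : p x) : D x ≤ pr D p := by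
  have := Finset.single_le_sum (f := fun y => if p y then D y else 0)
    (fun y _ => by split <;> simp [hD y]) (Finset.mem_univ x)
  rwa [if_pos hx] at this

/-- Grouping: expectation of `s ∘ f` as sum over values of `f`. -/
lemma sum_group (D : Ω → ℝ) (f : Ω → A) (s : A → ℝ) :
    ∑ x, D x * s (f x)
      = ∑ a ∈ Finset.image f Finset.univ, pr D (fun x => f x = a) * s a := by
  unfold pr
  simp only [Finset.sum_mul, ite_mul, zero_mul]
  rw [Finset.sum_comm]
  refine Finset.sum_congr rfl fun x _ => ?_
  rw [Finset.sum_ite_eq (Finset.image f Finset.univ) (f x) (fun a => D x * s a),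
    if_pos (Finset.mem_image_of_mem f (Finset.mem_univ x))]

lemma pr_total (hD : IsProb D) (f : Ω → A) :
    ∑ a ∈ Finset.image f Finset.univ, pr D (fun x => f x = a) = 1 := by
  have := sum_group D f (fun _ => 1)
  simp only [mul_one] at this
  rw [← this, hD.2]

lemma ent_eq_sum_omega (D : Ω → ℝ) (f : Ω → A) :
    ent D f = -∑ x, D x * Real.logb 2 (pr D (fun y => f y = f x)) := by
  rw [ent, sum_group D f (fun a => Real.logb 2 (pr D (fun x => f x = a)))]

lemma ent_nonneg (hD : IsProb D) (f : Ω → A) : 0 ≤ ent D f := by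
  rw [ent, ← Finset.sum_neg_distrib]
  refine Finset.sum_nonneg fun a _ => ?_
  rw [← mul_neg]
  refine mul_nonneg (pr_nonneg hD.1 _) ?_
  rw [neg_nonneg]
  exact Real.logb_nonpos (by norm_num) (pr_nonneg hD.1 _) (pr_le_one hD _)

lemma ent_eq_sum_univ [Fintype A] (D : Ω → ℝ) (f : Ω → A) :
    ent D f = -∑ a : A, pr D (fun x => f x = a) * Real.logb 2 (pr D (fun x => f x = a)) := by
  rw [ent]
  congr 1
  refine Finset.sum_subset (Finset.subset_univ _) fun a _ ha => ?_
  have : pr D (fun x => f x = a) = 0 := by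
    unfold pr
    refine Finset.sum_eq_zero fun x _ => ?_
    rw [if_neg]
    exact fun hx => ha (hx ▸ Finset.mem_image_of_mem f (Finset.mem_univ x))
  rw [this]; simp

/-- Subadditivity of entropy. -/
lemma ent_pair_le (hD : IsProb D) (α : Ω → A) (β : Ω → B) :
    ent D (fun x => (α x, β x)) ≤ ent D α + ent D β := by
  letI : DecidableEq (A × B) := fun a b => Classical.propDecidable (a = b)
  letI : DecidableEq A := fun a b => Classical.propDecidable (a = b)
  letI : DecidableEq B := fun a b => Classical.propDecidable (a = b)
  set pA : Ω → ℝ := fun x => pr D (fun y => α y = α x) with hpA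
  set pB : Ω → ℝ := fun x => pr D (fun y => β y = β x) with hpB
  set pAB : Ω → ℝ := fun x => pr D (fun y => (α y, β y) = (α x, β x)) with hpAB
  have key : ∀ x : Ω, D x ≠ 0 → 0 < pAB x ∧ 0 < pA x ∧ 0 < pB x := by
    intro x hx
    have hDx : 0 < D x := lt_of_le_of_ne (hD.1 x) (Ne.symm hx)
    have h3 : 0 < pAB x := lt_of_lt_of_le hDx (le_pr hD.1 rfl)
    have h1 : 0 < pA x := lt_of_lt_of_le h3
      (pr_mono hD.1 fun y hy => congrArg Prod.fst hy)
    have h2 : 0 < pB x := lt_of_lt_of_le h3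
      (pr_mono hD.1 fun y hy => congrArg Prod.snd hy)
    exact ⟨h3, h1, h2⟩
  rw [ent_eq_sum_omega D α, ent_eq_sum_omega D β, ent_eq_sum_omega D (fun x => (α x, β x))]
  have main : ∑ x, D x * (Real.log (pA x) + Real.log (pB x) - Real.log (pAB x)) ≤ 0 := by
    have step1 : ∑ x, D x * (Real.log (pA x) + Real.log (pB x) - Real.log (pAB x))
        ≤ ∑ x, (D x * (pA x * pB x / pAB x) - D x) := by
      refine Finset.sum_le_sum fun x _ => ?_
      by_cases hx : D x = 0
      · simp [hx]
      · obtain ⟨h3, h1, h2⟩ := key x hx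
        have hlog : Real.log (pA x) + Real.log (pB x) - Real.log (pAB x)
            = Real.log (pA x * pB x / pAB x) := by
          rw [Real.log_div (mul_ne_zero h1.ne' h2.ne') h3.ne', Real.log_mul h1.ne' h2.ne']
        have hle : Real.log (pA x * pB x / pAB x) ≤ pA x * pB x / pAB x - 1 :=
          Real.log_le_sub_one_of_pos (by positivity)
        have hDx : 0 ≤ D x := hD.1 x
        rw [hlog]
        nlinarith [mul_le_mul_of_nonneg_left hle hDx]
    have step2 : ∑ x, D x * (pA x * pB x / pAB x) ≤ 1 := by
      have hgroup := sum_group D (fun x => (α x, β x))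
        (fun c => pr D (fun x => α x = c.1) * pr D (fun x => β x = c.2)
          / pr D (fun x => (α x, β x) = c))
      rw [hgroup]
      refine le_trans (Finset.sum_le_sum (g := fun c =>
          pr D (fun x => α x = c.1) * pr D (fun x => β x = c.2)) ?_) ?_
      · intro c _
        rcases eq_or_lt_of_le (pr_nonneg hD.1 (fun x => (α x, β x) = c)) with hp | hp
        · rw [← hp, zero_mul]
          exact mul_nonneg (pr_nonneg hD.1 _) (pr_nonneg hD.1 _)
        · rw [mul_comm, div_mul_cancel₀ _ hp.ne']
      refine le_trans (Finset.sum_le_sum_of_subset_of_nonneg (t := ((Finset.image α Finset.univ) ×ˢ (Finset.image β Finset.univ) : Finset (A × B))) ?_ ?_) ?_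
      · intro c hc
        obtain ⟨x, _, hx⟩ := Finset.mem_image.1 hc
        subst hx
        exact Finset.mem_product.2 ⟨Finset.mem_image_of_mem α (Finset.mem_univ x),
          Finset.mem_image_of_mem β (Finset.mem_univ x)⟩
      · intro c _ _
        exact mul_nonneg (pr_nonneg hD.1 _) (pr_nonneg hD.1 _)
      · rw [Finset.sum_product]
        have : ∀ a ∈ Finset.image α Finset.univ,
            ∑ b ∈ Finset.image β Finset.univ,
              pr D (fun x => α x = a) * pr D (fun x => β x = b)
            = pr D (fun x => α x = a) := by
          intro a _
          rw [← Finset.mul_sum, pr_total hD β, mul_one]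
        rw [Finset.sum_congr rfl this, pr_total hD α]
    calc ∑ x, D x * (Real.log (pA x) + Real.log (pB x) - Real.log (pAB x))
        ≤ ∑ x, (D x * (pA x * pB x / pAB x) - D x) := step1
      _ = (∑ x, D x * (pA x * pB x / pAB x)) - 1 := by
          rw [Finset.sum_sub_distrib, hD.2]
      _ ≤ 0 := by linarith [step2]
  have hlog2 : (0:ℝ) < Real.log 2 := Real.log_pos (by norm_num)
  have hconv : ∑ x, D x * (Real.logb 2 (pA x) + Real.logb 2 (pB x) - Real.logb 2 (pAB x))
      = (∑ x, D x * (Real.log (pA x) + Real.log (pB x) - Real.log (pAB x))) / Real.log 2 := by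
    rw [Finset.sum_div]
    refine Finset.sum_congr rfl fun x _ => ?_
    simp only [Real.logb]
    ring
  have hfinal : ∑ x, D x * (Real.logb 2 (pA x) + Real.logb 2 (pB x) - Real.logb 2 (pAB x)) ≤ 0 := by
    rw [hconv]
    exact div_nonpos_of_nonpos_of_nonneg main hlog2.le
  simp only [mul_add, mul_sub, Finset.sum_add_distrib, Finset.sum_sub_distrib] at hfinal
  linarith

lemma ent_bool (hD : IsProb D) (E : Ω → Bool) :
    ent D E = binEnt (pr D (fun x => E x = false)) := by
  rw [ent_eq_sum_univ, Fintype.sum_bool]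
  have hsum : pr D (fun x => E x = true) + pr D (fun x => E x = false) = 1 := by
    unfold pr
    rw [← Finset.sum_add_distrib, ← hD.2]
    refine Finset.sum_congr rfl fun x _ => ?_
    cases hEx : E x <;> simp [hEx]
  have hpt : pr D (fun x => E x = true) = 1 - pr D (fun x => E x = false) := by linarith
  rw [hpt, binEnt]
  ring

lemma binEnt_le_two_sqrt (q : ℝ) (h0 : 0 ≤ q) (h1 : q ≤ 1) :
    binEnt q ≤ 2 * Real.sqrt q := by
  rcases eq_or_lt_of_le h0 with hq0 | hq0
  · rw [← hq0]; simp [binEnt]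
  rcases eq_or_lt_of_le h1 with hq1 | hq1
  · rw [hq1]; simp [binEnt]
  have hlog2 : (0.6931471803 : ℝ) < Real.log 2 := Real.log_two_gt_d9
  have hA : -(q * Real.log q) ≤ 4 * (q ^ ((3:ℝ)/4) - q) := by
    have hl : Real.log (q ^ (-(1/4) : ℝ)) ≤ q ^ (-(1/4) : ℝ) - 1 :=
      Real.log_le_sub_one_of_pos (Real.rpow_pos_of_pos hq0 _)
    rw [Real.log_rpow hq0] at hl
    have hq34 : q * q ^ (-(1/4) : ℝ) = q ^ ((3:ℝ)/4) := by
      calc q * q ^ (-(1/4) : ℝ) = q ^ (1:ℝ) * q ^ (-(1/4) : ℝ) := by rw [Real.rpow_one]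
        _ = q ^ ((3:ℝ)/4) := by rw [← Real.rpow_add hq0]; norm_num
    nlinarith [hl, hq0, hq34]
  have hB : -((1 - q) * Real.log (1 - q)) ≤ q := by
    have h1q : 0 < 1 - q := by linarith
    have hl := Real.log_le_sub_one_of_pos (show (0:ℝ) < (1 - q)⁻¹ by positivity)
    rw [Real.log_inv] at hl
    have h2 : (1 - q) * ((1 - q)⁻¹ - 1) = q := by field_simp; ring
    nlinarith [hl, h1q]
  set u := q ^ ((1:ℝ)/4) with hu
  have hu0 : 0 < u := Real.rpow_pos_of_pos hq0 _
  have hu2 : u ^ 2 = Real.sqrt q := by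
    rw [hu, ← Real.rpow_natCast (q ^ ((1:ℝ)/4)) 2, ← Real.rpow_mul h0]
    norm_num [Real.sqrt_eq_rpow]
  have hu3 : u ^ 3 = q ^ ((3:ℝ)/4) := by
    rw [hu, ← Real.rpow_natCast (q ^ ((1:ℝ)/4)) 3, ← Real.rpow_mul h0]
    norm_num
  have hu4 : u ^ 4 = q := by
    rw [hu, ← Real.rpow_natCast (q ^ ((1:ℝ)/4)) 4, ← Real.rpow_mul h0]
    norm_num
  have hkey : 4 * (q ^ ((3:ℝ)/4) - q) + q ≤ 2 * Real.log 2 * Real.sqrt q := by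
    rw [← hu2, ← hu3, ← hu4]
    nlinarith [sq_nonneg u, sq_nonneg (3*u - 2), mul_nonneg (sq_nonneg (3*u - 2)) (sq_nonneg u),
      hlog2, hu0.le]
  have hlogb : binEnt q = (-(q * Real.log q) - (1 - q) * Real.log (1 - q)) / Real.log 2 := by
    rw [binEnt]; simp only [Real.logb]; ring
  rw [hlogb, div_le_iff₀ (by positivity : (0:ℝ) < Real.log 2)]
  nlinarith [hA, hB, hkey]

end lemmas

/-- A valid explanation carries almost all the entropy of the prediction:
if `g` is `ε₀`-valid for `h` with `ε₀ < 1/2`, then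
`I(g(x,h(x)); h(x)) ≥ (1-ε₀)·H(h(x)) - 2√ε₀`. -/
theorem valid_ef_mutual_information {Ω G : Type*} [Fintype Ω] (D : Ω → ℝ) (hD : IsProb D)
    (h : Ω → ℤ) (hh : ∀ x, h x = 1 ∨ h x = -1)
    (g : Ω → ℤ → G) (ε₀ : ℝ) (hε₀ : 0 ≤ ε₀) (hε₀' : ε₀ < 1 / 2)
    (hvalid : ∃ t : G → ℤ, pr D (fun x => t (g x (h x)) ≠ h x) ≤ ε₀) :
    (1 - ε₀) * ent D h - 2 * Real.sqrt ε₀ ≤ mi D (fun x => g x (h x)) h := by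
  obtain ⟨t, ht⟩ := hvalid
  set f : Ω → G := fun x => g x (h x) with hf
  set t' : G → ℤ := fun y => if t y = 1 then 1 else -1 with ht'
  set E : Ω → Bool := fun x => decide (t' (f x) = h x) with hE
  have ht'range : ∀ z : Ω, t' (f z) = 1 ∨ t' (f z) = -1 := by
    intro z; rw [ht']; dsimp only; split <;> simp
  -- error probability bound
  have hq : pr D (fun x => E x = false) ≤ ε₀ := by
    refine le_trans (pr_mono hD.1 ?_) ht
    intro x hx hteq
    have hne : ¬ (t' (f x) = h x) := by simpa [hE] using hx
    apply hne
    have htf : t (f x) = h x := hteq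
    rcases hh x with h1 | h1 <;> rw [ht'] <;> dsimp only <;> rw [htf, h1] <;> norm_num
  -- (f, h) and (f, E) determine each other
  have hdet : ∀ z : Ω, h z = if E z then t' (f z) else -(t' (f z)) := by
    intro z
    by_cases hez : t' (f z) = h z
    · simp [hE, hez]
    · rw [hE]; dsimp only
      rw [if_neg (by simpa using hez)]
      rcases ht'range z with h1 | h1 <;> rcases hh z with h2 | h2 <;>
        simp_all <;> omega
  have hiff : ∀ x y : Ω, ((f y, h y) = (f x, h x)) ↔ ((f y, E y) = (f x, E x)) := by
    intro x y
    rw [Prod.mk.injEq, Prod.mk.injEq]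
    constructor
    · rintro ⟨h1, h2⟩
      exact ⟨h1, by rw [hE]; dsimp only; rw [h1, h2]⟩
    · rintro ⟨h1, h2⟩
      exact ⟨h1, by rw [hdet y, hdet x, h1, h2]⟩
  have hent1 : ent D (fun x => (f x, h x)) = ent D (fun x => (f x, E x)) := by
    rw [ent_eq_sum_omega, ent_eq_sum_omega]
    congr 1
    refine Finset.sum_congr rfl fun x _ => ?_
    rw [pr_congr (fun y => hiff x y)]
  have hsub : ent D (fun x => (f x, E x)) ≤ ent D f + ent D E := ent_pair_le hD f E
  have hEbound : ent D E ≤ 2 * Real.sqrt ε₀ := by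
    rw [ent_bool hD E]
    refine le_trans (binEnt_le_two_sqrt _ (pr_nonneg hD.1 _) (pr_le_one hD _)) ?_
    have := Real.sqrt_le_sqrt hq
    linarith
  have hth : 0 ≤ ent D h := ent_nonneg hD h
  have hmi : ent D h - ent D E ≤ mi D f h := by
    rw [mi, hent1]
    linarith
  nlinarith [mul_nonneg hε₀ hth]
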